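/- Let p be a prime. In the ring A = Z[t,u]/(t² − pt, u² − p²u, tu − pu), the ideal (q, t − p, u − p²) is prime for every prime number q ≠ p, and the three ideals (p, t, u), (p, t − p, u), and (p, t − p, u − p²) are all equal. -/
import Mathlib


open MvPolynomial

/-- The ring `A = ℤ[t,u]/(t² − pt, u² − p²u, tu − pu)`, the Burnside ring of `C_{p²}`,
with `t = X 0` and `u = X 1`. -/
abbrev BurnsideCp2 (p : ℕ) : Type :=
  MvPolynomial (Fin 2) ℤ ⧸ Ideal.span
    {(X 0 : MvPolynomial (Fin 2) ℤ) ^ 2 - C (p : ℤ) * X 0,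
     (X 1 : MvPolynomial (Fin 2) ℤ) ^ 2 - C ((p : ℤ) ^ 2) * X 1,
     (X 0 : MvPolynomial (Fin 2) ℤ) * X 1 - C (p : ℤ) * X 1}

/-- The class `t = [C_{p²}/C_p]`. -/
noncomputable def tE (p : ℕ) : BurnsideCp2 p :=
  Ideal.Quotient.mk _ (X 0 : MvPolynomial (Fin 2) ℤ)

/-- The class `u = [C_{p²}/e]`. -/
noncomputable def uE (p : ℕ) : BurnsideCp2 p :=
  Ideal.Quotient.mk _ (X 1 : MvPolynomial (Fin 2) ℤ)

lemma sub_C_eval_mem (w : Fin 2 → ℤ) (f : MvPolynomial (Fin 2) ℤ) :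
    f - C (eval w f) ∈
      Ideal.span (Set.range fun i => (X i : MvPolynomial (Fin 2) ℤ) - C (w i)) := by
  induction f using MvPolynomial.induction_on with
  | C a => simp
  | add f g hf hg =>
      have := Ideal.add_mem _ hf hg
      simpa [add_sub_add_comm] using this
  | mul_X f i hf =>
      have h1 : f * X i - C (eval w (f * X i))
          = f * (X i - C (w i)) + (f - C (eval w f)) * C (w i) := by
        simp only [map_mul, eval_X]
        ring
      rw [h1]
      exact Ideal.add_mem _
        (Ideal.mul_mem_left _ f (Ideal.subset_span ⟨i, rfl⟩))
        (Ideal.mul_mem_right _ _ hf)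

/-- In `A = ℤ[t,u]/(t² − pt, u² − p²u, tu − pu)`: the ideal `(q, t − p, u − p²)` is prime
for every prime `q ≠ p`, and `(p, t, u) = (p, t − p, u) = (p, t − p, u − p²)`. -/
theorem burnsideCp2_prime_ideals (p : ℕ) (hp : p.Prime) :
    (∀ q : ℕ, q.Prime → q ≠ p →
      (Ideal.span {((q : BurnsideCp2 p)), tE p - (p : BurnsideCp2 p),
        uE p - (p : BurnsideCp2 p) ^ 2}).IsPrime) ∧
    Ideal.span {((p : BurnsideCp2 p)), tE p, uE p} =
      Ideal.span {((p : BurnsideCp2 p)), tE p - (p : BurnsideCp2 p), uE p} ∧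
    Ideal.span {((p : BurnsideCp2 p)), tE p - (p : BurnsideCp2 p), uE p} =
      Ideal.span {((p : BurnsideCp2 p)), tE p - (p : BurnsideCp2 p),
        uE p - (p : BurnsideCp2 p) ^ 2} := by
  set I : Ideal (MvPolynomial (Fin 2) ℤ) := Ideal.span
    {(X 0 : MvPolynomial (Fin 2) ℤ) ^ 2 - C (p : ℤ) * X 0,
     (X 1 : MvPolynomial (Fin 2) ℤ) ^ 2 - C ((p : ℤ) ^ 2) * X 1,
     (X 0 : MvPolynomial (Fin 2) ℤ) * X 1 - C (p : ℤ) * X 1} with hI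
  have hCp : (C (p : ℤ) : MvPolynomial (Fin 2) ℤ) = (p : MvPolynomial (Fin 2) ℤ) := map_natCast C p
  have hCp2 : (C ((p : ℤ) ^ 2) : MvPolynomial (Fin 2) ℤ) = (p : MvPolynomial (Fin 2) ℤ) ^ 2 := by rw [map_pow, hCp]
  refine ⟨?_, ?_, ?_⟩
  · intro q hq hqp
    haveI : Fact q.Prime := ⟨hq⟩
    set w : Fin 2 → ℤ := ![(p : ℤ), (p : ℤ) ^ 2] with hw
    set ψ : MvPolynomial (Fin 2) ℤ →+* ZMod q := (Int.castRingHom (ZMod q)).comp (eval w) with hψ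
    set J : Ideal (MvPolynomial (Fin 2) ℤ) := Ideal.span {(q : MvPolynomial (Fin 2) ℤ), X 0 - (p : MvPolynomial (Fin 2) ℤ), X 1 - (p : MvPolynomial (Fin 2) ℤ) ^ 2} with hJdef
    -- J = ker ψ
    have hJ : J = RingHom.ker ψ := by
      apply le_antisymm
      · rw [hJdef, Ideal.span_le]
        rintro x hx
        simp only [Set.mem_insert_iff, Set.mem_singleton_iff] at hx
        rcases hx with rfl | rfl | rfl <;>
          simp [RingHom.mem_ker, hψ, hw, ZMod.natCast_self, eval_X,
            Matrix.cons_val_zero, Matrix.cons_val_one, Matrix.head_cons, Int.cast_natCast]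
      · intro f hf
        have hd : (q : ℤ) ∣ eval w f := by
          have : ((eval w f : ℤ) : ZMod q) = 0 := hf
          exact_mod_cast (ZMod.intCast_zmod_eq_zero_iff_dvd _ q).mp this
        obtain ⟨c, hc⟩ := hd
        have hsub := sub_C_eval_mem w f
        have hle : Ideal.span (Set.range fun i => (X i : MvPolynomial (Fin 2) ℤ) - C (w i)) ≤ J := by
          rw [Ideal.span_le]
          rintro x ⟨i, rfl⟩
          fin_cases i
          · simp only [hw, Matrix.cons_val_zero, hCp]
            exact Ideal.subset_span (by simp)
          · simp only [hw, Matrix.cons_val_one, Matrix.head_cons, hCp2]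
            exact Ideal.subset_span (by simp)
        have h2 : (C (eval w f) : MvPolynomial (Fin 2) ℤ) ∈ J := by
          rw [hc, map_mul]
          rw [map_natCast C q]
          exact Ideal.mul_mem_right _ _ (Ideal.subset_span (by simp))
        have := Ideal.add_mem _ (hle hsub) h2
        simpa using this
    have hJprime : J.IsPrime := hJ ▸ RingHom.ker_isPrime ψ
    -- I ≤ J
    have hIJ : I ≤ J := by
      rw [hI, Ideal.span_le]
      rintro x hx
      simp only [Set.mem_insert_iff, Set.mem_singleton_iff] at hx
      have h1 : (X 0 : MvPolynomial (Fin 2) ℤ) - (p : MvPolynomial (Fin 2) ℤ) ∈ J := Ideal.subset_span (by simp)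
      have h2 : (X 1 : MvPolynomial (Fin 2) ℤ) - (p : MvPolynomial (Fin 2) ℤ) ^ 2 ∈ J := Ideal.subset_span (by simp)
      rcases hx with rfl | rfl | rfl
      · have : (X 0 : MvPolynomial (Fin 2) ℤ) ^ 2 - C (p : ℤ) * X 0 = X 0 * ((X 0 : MvPolynomial (Fin 2) ℤ) - (p : MvPolynomial (Fin 2) ℤ)) := by
          rw [hCp]; ring
        rw [this]; exact Ideal.mul_mem_left _ _ h1
      · have : (X 1 : MvPolynomial (Fin 2) ℤ) ^ 2 - C ((p : ℤ) ^ 2) * X 1 = X 1 * ((X 1 : MvPolynomial (Fin 2) ℤ) - (p : MvPolynomial (Fin 2) ℤ) ^ 2) := by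
          rw [hCp2]; ring
        rw [this]; exact Ideal.mul_mem_left _ _ h2
      · have : (X 0 : MvPolynomial (Fin 2) ℤ) * X 1 - C (p : ℤ) * X 1 = ((X 0 : MvPolynomial (Fin 2) ℤ) - (p : MvPolynomial (Fin 2) ℤ)) * X 1 := by
          rw [hCp]; ring
        rw [this]; exact Ideal.mul_mem_right _ _ h1
    -- target ideal is the image of J
    have hmap : Ideal.span {((q : BurnsideCp2 p)), tE p - (p : BurnsideCp2 p),
        uE p - (p : BurnsideCp2 p) ^ 2} = J.map (Ideal.Quotient.mk I) := by
      rw [hJdef, Ideal.map_span]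
      congr 1
      simp only [Set.image_insert_eq, Set.image_singleton, map_sub, map_pow, map_natCast]
      rfl
    rw [hmap]
    exact Ideal.map_isPrime_of_surjective Ideal.Quotient.mk_surjective
      (by rw [Ideal.mk_ker]; exact hIJ)
  · apply le_antisymm <;> rw [Ideal.span_le] <;> intro x hx <;>
      simp only [Set.mem_insert_iff, Set.mem_singleton_iff] at hx
    · have ha : (p : BurnsideCp2 p) ∈ Ideal.span {((p : BurnsideCp2 p)),
        tE p - (p : BurnsideCp2 p), uE p} := Ideal.subset_span (by simp)
      have hb : tE p - (p : BurnsideCp2 p) ∈ Ideal.span {((p : BurnsideCp2 p)),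
        tE p - (p : BurnsideCp2 p), uE p} := Ideal.subset_span (by simp)
      rcases hx with rfl | rfl | rfl
      · exact ha
      · simpa using Ideal.add_mem _ hb ha
      · exact Ideal.subset_span (by simp)
    · have ha : (p : BurnsideCp2 p) ∈ Ideal.span {((p : BurnsideCp2 p)),
        tE p, uE p} := Ideal.subset_span (by simp)
      have hb : tE p ∈ Ideal.span {((p : BurnsideCp2 p)),
        tE p, uE p} := Ideal.subset_span (by simp)
      rcases hx with rfl | rfl | rfl
      · exact ha
      · exact Ideal.sub_mem _ hb ha
      · exact Ideal.subset_span (by simp)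
  · apply le_antisymm <;> rw [Ideal.span_le] <;> intro x hx <;>
      simp only [Set.mem_insert_iff, Set.mem_singleton_iff] at hx
    · have ha : (p : BurnsideCp2 p) ∈ Ideal.span {((p : BurnsideCp2 p)),
        tE p - (p : BurnsideCp2 p), uE p - (p : BurnsideCp2 p) ^ 2} :=
        Ideal.subset_span (by simp)
      have hc : uE p - (p : BurnsideCp2 p) ^ 2 ∈ Ideal.span {((p : BurnsideCp2 p)),
        tE p - (p : BurnsideCp2 p), uE p - (p : BurnsideCp2 p) ^ 2} :=
        Ideal.subset_span (by simp)
      rcases hx with rfl | rfl | rfl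
      · exact ha
      · exact Ideal.subset_span (by simp)
      · have h2 : (p : BurnsideCp2 p) ^ 2 ∈ Ideal.span {((p : BurnsideCp2 p)),
          tE p - (p : BurnsideCp2 p), uE p - (p : BurnsideCp2 p) ^ 2} :=
          Ideal.pow_mem_of_mem _ ha 2 (by norm_num)
        simpa using Ideal.add_mem _ hc h2
    · have ha : (p : BurnsideCp2 p) ∈ Ideal.span {((p : BurnsideCp2 p)),
        tE p - (p : BurnsideCp2 p), uE p} := Ideal.subset_span (by simp)
      have hc : uE p ∈ Ideal.span {((p : BurnsideCp2 p)),
        tE p - (p : BurnsideCp2 p), uE p} := Ideal.subset_span (by simp)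
      rcases hx with rfl | rfl | rfl
      · exact ha
      · exact Ideal.subset_span (by simp)
      · have h2 : (p : BurnsideCp2 p) ^ 2 ∈ Ideal.span {((p : BurnsideCp2 p)),
          tE p - (p : BurnsideCp2 p), uE p} :=
          Ideal.pow_mem_of_mem _ ha 2 (by norm_num)
        exact Ideal.sub_mem _ hc h2
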